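/- Let P, M₁,…,Mₙ, N₁,…,Nₙ be real 2n×2n matrices and m > 0, and suppose there exist symmetric matrices X₁,…,Xₙ and W with Sym(W·P) ⪰ m·I + Σᵢ Xᵢ, and for each i and each l ∈ {1,…,4}, Xᵢ ⪰ Sym(δᵢ(-K₁ₗ W Mᵢ - K₂ₗ W Nᵢ)) and Xᵢ ⪰ Sym(δᵢ(K₁ₗ W Mᵢ - K₂ₗ W Nᵢ)), where K is the fixed 2×4 matrix. Then for all (a₁,b₁),…,(aₙ,bₙ) with aᵢ² + bᵢ² ≤ δᵢ², we have Sym(W·P) + Σᵢ Sym(W(aᵢMᵢ + bᵢNᵢ)) ⪰ m·I. -/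

import Mathlib

/-!
The vectors `(±Kmat 0 l, Kmat 1 l)` are the eight vertices `(±1, ±(√2 - 1))`, `(±(√2 - 1), ±1)`
of the regular octagon circumscribed about the unit disk. Testing the certificate LMIs against a
vector `x` and writing `s = xᵀ W Mᵢ x`, `t = xᵀ W Nᵢ x`, they say that `|δᵢ|` times the support
function of this octagon at `(s, t)` is at most `xᵀ Xᵢ x`. That support function dominates the
Euclidean norm of `(s, t)`, which by Cauchy–Schwarz bounds `-(aᵢ s + bᵢ t) / |δᵢ|`. Hence
`Xᵢ + Sym(W (aᵢ Mᵢ + bᵢ Nᵢ)) ⪰ 0` for each `i`, and adding these to the LMI for `W` gives the claim.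
-/

open Matrix

/-- The fixed 2×4 matrix `K` from the paper. -/
noncomputable def Kmat : Matrix (Fin 2) (Fin 4) ℝ :=
  !![1 - Real.sqrt 2, -1, -1, 1 - Real.sqrt 2;
     1, Real.sqrt 2 - 1, 1 - Real.sqrt 2, -1]

/-- Symmetrization of a square matrix: `Sym(A) = (A + Aᵀ)/2`. -/
noncomputable def symPart {k : ℕ} (A : Matrix (Fin k) (Fin k) ℝ) : Matrix (Fin k) (Fin k) ℝ :=
  (1 / 2 : ℝ) • (A + Aᵀ)

section SymPart

variable {k : ℕ}

lemma isSymm_symPart (A : Matrix (Fin k) (Fin k) ℝ) : (symPart A).IsSymm := by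
  simp only [symPart, IsSymm, transpose_smul, transpose_add, transpose_transpose, add_comm]

lemma symPart_neg (A : Matrix (Fin k) (Fin k) ℝ) : symPart (-A) = -symPart A := by
  simp only [symPart, transpose_neg, smul_neg, ← neg_add]

lemma dotProduct_symPart_mulVec (A : Matrix (Fin k) (Fin k) ℝ) (x : Fin k → ℝ) :
    x ⬝ᵥ symPart A *ᵥ x = x ⬝ᵥ A *ᵥ x := by
  have htranspose : x ⬝ᵥ Aᵀ *ᵥ x = x ⬝ᵥ A *ᵥ x := by
    rw [mulVec_transpose, dotProduct_comm, ← dotProduct_mulVec]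
  rw [symPart, smul_mulVec, add_mulVec, dotProduct_smul, dotProduct_add, htranspose, smul_eq_mul]
  ring

lemma posSemidef_add_symPart_iff {X : Matrix (Fin k) (Fin k) ℝ} (hX : X.IsSymm)
    (B : Matrix (Fin k) (Fin k) ℝ) :
    (X + symPart B).PosSemidef ↔ ∀ x, 0 ≤ x ⬝ᵥ X *ᵥ x + x ⬝ᵥ B *ᵥ x := by
  rw [posSemidef_iff_dotProduct_mulVec]
  simp only [star_trivial, add_mulVec, dotProduct_add, dotProduct_symPart_mulVec,
    and_iff_right_iff_imp]
  exact fun _ => hX.add (isSymm_symPart B)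

lemma posSemidef_sub_symPart_iff {X : Matrix (Fin k) (Fin k) ℝ} (hX : X.IsSymm)
    (B : Matrix (Fin k) (Fin k) ℝ) :
    (X - symPart B).PosSemidef ↔ ∀ x, x ⬝ᵥ B *ᵥ x ≤ x ⬝ᵥ X *ᵥ x := by
  rw [sub_eq_add_neg, ← symPart_neg, posSemidef_add_symPart_iff hX]
  simp only [neg_mulVec, dotProduct_neg, ← sub_eq_add_neg, sub_nonneg]

end SymPart

section Octagon

open Real

/-- Support function of the octagon with vertices `(±1, ±(√2 - 1))`, `(±(√2 - 1), ±1)`. -/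
noncomputable def octagonSupport (s t : ℝ) : ℝ :=
  max (|s| + (√2 - 1) * |t|) ((√2 - 1) * |s| + |t|)

lemma octagonSupport_mul (c s t : ℝ) :
    octagonSupport (c * s) (c * t) = |c| * octagonSupport s t := by
  rw [octagonSupport, octagonSupport, mul_max_of_nonneg _ _ (abs_nonneg c), abs_mul, abs_mul]
  congr 1 <;> ring

lemma sqrt_sq_add_sq_le_of_abs_le {s t : ℝ} (h : |t| ≤ |s|) :
    √(s ^ 2 + t ^ 2) ≤ |s| + (√2 - 1) * |t| := by
  have hr : 0 ≤ √2 - 1 := by simp [one_le_sqrt]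
  have hr_sq : (√2 - 1) ^ 2 + 2 * (√2 - 1) = 1 := by
    nlinarith [sq_sqrt (zero_le_two : (0 : ℝ) ≤ 2)]
  rw [sqrt_le_left (by positivity)]
  nlinarith [sq_abs s, sq_abs t, mul_le_mul_of_nonneg_left h (mul_nonneg hr (abs_nonneg t))]

lemma sqrt_sq_add_sq_le_octagonSupport (s t : ℝ) : √(s ^ 2 + t ^ 2) ≤ octagonSupport s t := by
  rcases le_total |t| |s| with h | h
  · exact le_max_of_le_left (sqrt_sq_add_sq_le_of_abs_le h)
  · rw [add_comm (s ^ 2)]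
    exact le_max_of_le_right ((sqrt_sq_add_sq_le_of_abs_le h).trans_eq (add_comm _ _))

lemma octagonSupport_le_of_forall_Kmat {s t q : ℝ}
    (h1 : ∀ l, -Kmat 0 l * s - Kmat 1 l * t ≤ q) (h2 : ∀ l, Kmat 0 l * s - Kmat 1 l * t ≤ q) :
    octagonSupport s t ≤ q := by
  simp only [Fin.forall_fin_succ, IsEmpty.forall_iff, and_true, Kmat, of_apply, cons_val',
    cons_val_zero, cons_val_one, cons_val, Fin.succ_zero_eq_one, Fin.succ_one_eq_two,
    Fin.reduceSucc, cons_val_fin_one] at h1 h2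
  obtain ⟨_, _, _, _⟩ := h1
  obtain ⟨_, _, _, _⟩ := h2
  rw [octagonSupport, max_le_iff]
  rcases abs_cases s with ⟨hs, -⟩ | ⟨hs, -⟩ <;> rcases abs_cases t with ⟨ht, -⟩ | ⟨ht, -⟩ <;>
    rw [hs, ht] <;> constructor <;> linarith

lemma abs_mul_add_mul_le_of_sq_add_sq_le {a b δ : ℝ} (hab : a ^ 2 + b ^ 2 ≤ δ ^ 2) (s t : ℝ) :
    |a * s + b * t| ≤ |δ| * √(s ^ 2 + t ^ 2) := by
  rw [← sqrt_sq_eq_abs δ, ← sqrt_mul (sq_nonneg δ)]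
  apply abs_le_sqrt
  nlinarith [sq_nonneg (a * t - b * s),
    mul_le_mul_of_nonneg_right hab (by positivity : 0 ≤ s ^ 2 + t ^ 2)]

lemma zero_le_add_of_forall_Kmat {δ a b s t q : ℝ} (hab : a ^ 2 + b ^ 2 ≤ δ ^ 2)
    (h1 : ∀ l, δ * (-Kmat 0 l * s - Kmat 1 l * t) ≤ q)
    (h2 : ∀ l, δ * (Kmat 0 l * s - Kmat 1 l * t) ≤ q) :
    0 ≤ q + (a * s + b * t) := by
  have hsupport : octagonSupport (δ * s) (δ * t) ≤ q :=
    octagonSupport_le_of_forall_Kmat (fun l => (h1 l).trans_eq' (by ring))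
      (fun l => (h2 l).trans_eq' (by ring))
  have hneg := calc
    -(a * s + b * t) ≤ |δ| * √(s ^ 2 + t ^ 2) :=
      (neg_le_abs _).trans (abs_mul_add_mul_le_of_sq_add_sq_le hab s t)
    _ ≤ |δ| * octagonSupport s t :=
      mul_le_mul_of_nonneg_left (sqrt_sq_add_sq_le_octagonSupport s t) (abs_nonneg δ)
    _ = octagonSupport (δ * s) (δ * t) := (octagonSupport_mul δ s t).symm
    _ ≤ q := hsupport
  linarith

end Octagon

theorem certificate_implies_monotonicity_LMI_general {n : ℕ}
    (P W : Matrix (Fin (2 * n)) (Fin (2 * n)) ℝ)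
    (M N : Fin n → Matrix (Fin (2 * n)) (Fin (2 * n)) ℝ)
    (X : Fin n → Matrix (Fin (2 * n)) (Fin (2 * n)) ℝ)
    (δ : Fin n → ℝ)
    (m : ℝ)
    (hXsymm : ∀ i, (X i).IsSymm)
    (hW : (symPart (W * P) -
      (m • (1 : Matrix (Fin (2 * n)) (Fin (2 * n)) ℝ) + ∑ i, X i)).PosSemidef)
    (h1 : ∀ i, ∀ l : Fin 4,
      (X i - symPart (δ i • ((-Kmat 0 l) • (W * M i) - Kmat 1 l • (W * N i)))).PosSemidef)
    (h2 : ∀ i, ∀ l : Fin 4,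
      (X i - symPart (δ i • (Kmat 0 l • (W * M i) - Kmat 1 l • (W * N i)))).PosSemidef) :
    ∀ a b : Fin n → ℝ, (∀ i, (a i) ^ 2 + (b i) ^ 2 ≤ (δ i) ^ 2) →
      (symPart (W * P) + ∑ i, symPart (W * (a i • M i + b i • N i)) -
        m • (1 : Matrix (Fin (2 * n)) (Fin (2 * n)) ℝ)).PosSemidef := by
  intro a b hab
  have hterm : ∀ i, (X i + symPart (W * (a i • M i + b i • N i))).PosSemidef := by
    intro i
    rw [posSemidef_add_symPart_iff (hXsymm i)]
    intro x
    have hK1 := fun l => (posSemidef_sub_symPart_iff (hXsymm i) _).mp (h1 i l) x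
    have hK2 := fun l => (posSemidef_sub_symPart_iff (hXsymm i) _).mp (h2 i l) x
    simp only [mul_add, Matrix.mul_smul, sub_mulVec, add_mulVec, smul_mulVec, dotProduct_sub,
      dotProduct_add, dotProduct_smul, smul_eq_mul] at hK1 hK2 ⊢
    exact zero_le_add_of_forall_Kmat (hab i) hK1 hK2
  have hsplit : symPart (W * P) + ∑ i, symPart (W * (a i • M i + b i • N i)) - m • 1 =
      (symPart (W * P) - (m • 1 + ∑ i, X i)) +
        ∑ i, (X i + symPart (W * (a i • M i + b i • N i))) := by
    rw [Finset.sum_add_distrib]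
    abel
  rw [hsplit]
  exact hW.add (posSemidef_sum _ fun i _ => hterm i)

/-- Abstract form of Theorem 4: the LMI certificate `(W, X₁, …, Xₙ)` guarantees
that the monotonicity LMI `Sym(W P) + Σᵢ Sym(W(aᵢMᵢ + bᵢNᵢ)) ⪰ m I` holds for all
perturbations with `aᵢ² + bᵢ² ≤ δᵢ²`. -/
theorem certificate_implies_monotonicity_LMI {n : ℕ}
    (P W : Matrix (Fin (2 * n)) (Fin (2 * n)) ℝ)
    (M N : Fin n → Matrix (Fin (2 * n)) (Fin (2 * n)) ℝ)
    (X : Fin n → Matrix (Fin (2 * n)) (Fin (2 * n)) ℝ)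
    (δ : Fin n → ℝ) (hδ : ∀ i, 0 < δ i)
    (m : ℝ) (hm : 0 < m)
    (hXsymm : ∀ i, (X i).IsSymm)
    (hW : (symPart (W * P) -
      (m • (1 : Matrix (Fin (2 * n)) (Fin (2 * n)) ℝ) + ∑ i, X i)).PosSemidef)
    (h1 : ∀ i, ∀ l : Fin 4,
      (X i - symPart (δ i • ((-Kmat 0 l) • (W * M i) - Kmat 1 l • (W * N i)))).PosSemidef)
    (h2 : ∀ i, ∀ l : Fin 4,
      (X i - symPart (δ i • (Kmat 0 l • (W * M i) - Kmat 1 l • (W * N i)))).PosSemidef) :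
    ∀ a b : Fin n → ℝ, (∀ i, (a i) ^ 2 + (b i) ^ 2 ≤ (δ i) ^ 2) →
      (symPart (W * P) + ∑ i, symPart (W * (a i • M i + b i • N i)) -
        m • (1 : Matrix (Fin (2 * n)) (Fin (2 * n)) ℝ)).PosSemidef :=
  certificate_implies_monotonicity_LMI_general P W M N X δ m hXsymm hW h1 h2
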